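/- For each even N, let {Y_{N,m,r} : 1 ≤ m ≤ M, 0 ≤ r ≤ d_m−1} be mutually independent binomial random variables, where Y_{N,m,r} has parameters R_{N,m,r} := C(N/2 − 1, d_m−1−r)·C(N/2, r) and p_{N,m,r} := min( α^{(m)}_{(r, d_m−r)}·log N / C(N−1, d_m−1), 1 ). Let s = sgn(ξ) with ξ ≠ 0 and define D_N := s·Σ_{m=1}^M Σ_{r=0}^{d_m−1} (d_m−1−2r)·Y_{N,m,r}. If I > 1, then there exists a constant ε > 0 (depending only on M, (d_m) and the α's) such that N · P( D_N ≤ ε·log N ) → 0 as N → ∞ along even N. -/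

import Mathlib

/-!
Since `1 - e^{-y} ≤ y`, we have `ψ x ≤ ξ x`, so a point `x₀` with `ψ x₀ > 1` satisfies
`t := s x₀ > 0`. The exponential Chernoff bound at `-t` gives
`P(D_N ≤ ε log N) ≤ exp (t ε log N - ∑ R p (1 - e^{-x₀ (d - 1 - 2r)}))`, and since
`R_{N,m,r} p_{N,m,r} ~ α_{m,r} C(d_m - 1, r) 2^{-(d_m - 1)} log N`, the sum in the exponent is
`(ψ x₀ + o(1)) log N`. Taking `t ε = (ψ x₀ - 1) / 2` leaves
`N · P(D_N ≤ ε log N) ≤ N^{-(ψ x₀ - 1)/2 + o(1)}`.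
-/

open MeasureTheory ProbabilityTheory Finset Filter Asymptotics Topology

lemma isEquivalent_choose_sub (c k : ℕ) :
    (fun n : ℕ => ((n - c).choose k : ℝ)) ~[atTop] fun n => (n : ℝ) ^ k / k.factorial := by
  have hsub : (fun n : ℕ => ((n - c : ℕ) : ℝ)) ~[atTop] fun n => (n : ℝ) := by
    have hc : (fun _ : ℕ => (c : ℝ)) =o[atTop] fun n => (n : ℝ) :=
      (isLittleO_const_id_atTop (c : ℝ)).comp_tendsto tendsto_natCast_atTop_atTop
    refine EventuallyEq.trans_isEquivalent ?_ (IsEquivalent.refl.sub_isLittleO hc)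
    filter_upwards [eventually_ge_atTop c] with n hn
    simp [Nat.cast_sub hn]
  exact ((isEquivalent_choose k).comp_tendsto (tendsto_sub_atTop_nat c)).trans
    ((hsub.pow k).div IsEquivalent.refl)

lemma tendsto_two_mul_atTop : Tendsto (fun n : ℕ => 2 * n) atTop atTop :=
  tendsto_id.const_mul_atTop' two_pos

lemma tendsto_choose_mul_choose_div_choose {e r : ℕ} (hr : r ≤ e) :
    Tendsto (fun n : ℕ => ((n - 1).choose (e - r) * n.choose r : ℝ) / ((2 * n - 1).choose e : ℝ))
      atTop (𝓝 ((e.choose r : ℝ) / 2 ^ e)) := by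
  obtain ⟨k, rfl⟩ := Nat.exists_eq_add_of_le' hr
  rw [Nat.add_sub_cancel]
  have hnum := (isEquivalent_choose_sub 1 k).mul (isEquivalent_choose r)
  have hden := (isEquivalent_choose_sub 1 (k + r)).comp_tendsto tendsto_two_mul_atTop
  refine ((hnum.div hden).symm).tendsto_nhds (tendsto_const_nhds.congr' ?_)
  filter_upwards [eventually_ge_atTop 1] with n hn
  have hfac : ((k + r).choose r : ℝ) * k.factorial * r.factorial = (k + r).factorial := by
    exact_mod_cast Nat.add_choose_mul_factorial_mul_factorial k r
  have hn0 : (n : ℝ) ≠ 0 := by positivity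
  simp only [Function.comp, Pi.mul_apply, Pi.div_apply, Nat.cast_mul, Nat.cast_ofNat]
  field_simp
  rw [← hfac]
  ring

lemma isLittleO_log_choose_sub_one {e : ℕ} (he : 1 ≤ e) :
    (fun N : ℕ => Real.log N) =o[atTop] fun N => ((N - 1).choose e : ℝ) := by
  have hpow : Real.log =o[atTop] fun x : ℝ => x ^ e := by
    simpa using isLittleO_log_rpow_atTop (r := e) (by exact_mod_cast he)
  refine IsLittleO.trans_isEquivalent ?_ (isEquivalent_choose_sub 1 e).symm
  simp_rw [div_eq_inv_mul]
  exact ((hpow.comp_tendsto tendsto_natCast_atTop_atTop).const_mul_right'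
    (isUnit_iff_ne_zero.2 (by positivity)))

lemma one_sub_add_mul_pow_le_exp {p E : ℝ} (hp0 : 0 ≤ p) (hp1 : p ≤ 1) (hE : 0 ≤ E) (n : ℕ) :
    (1 - p + p * E) ^ n ≤ Real.exp (-(n * p * (1 - E))) := by
  calc (1 - p + p * E) ^ n ≤ Real.exp (-(p * (1 - E))) ^ n :=
        pow_le_pow_left₀ (by nlinarith) (by linarith [Real.one_sub_le_exp_neg (p * (1 - E))]) n
    _ = Real.exp (-(n * p * (1 - E))) := by rw [← Real.exp_nat_mul]; ring_nf

lemma tendsto_exp_mul_sub_of_tendsto_div {β : Type*} {l : Filter β} {L S : β → ℝ} {c I : ℝ}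
    (hL : Tendsto L l atTop) (hS : Tendsto (fun x => S x / L x) l (𝓝 I)) (hc : c < I) :
    Tendsto (fun x => Real.exp (c * L x - S x)) l (𝓝 0) := by
  refine Real.tendsto_exp_atBot.comp ((hL.atTop_mul_neg (sub_neg.2 hc)
    (tendsto_const_nhds.sub hS)).congr' ?_)
  filter_upwards [hL.eventually_gt_atTop 0] with x hx
  field_simp

lemma tendsto_of_tendsto_two_mul {β : Type*} {f : ℕ → β} {l : Filter β}
    (h : Tendsto (fun n => f (2 * n)) atTop l) : Tendsto f (atTop ⊓ 𝓟 {N | Even N}) l := by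
  refine (tendsto_map'_iff.2 h).mono_left fun U hU => ?_
  obtain ⟨c, hc⟩ := mem_atTop_sets.1 (mem_map.1 hU)
  refine mem_of_superset (inter_mem_inf (mem_atTop (2 * c)) (mem_principal_self _)) ?_
  rintro N ⟨hN, k, rfl⟩
  rw [← two_mul]
  exact hc k (by simp only [Set.mem_ofPred_eq] at hN; omega)

lemma sign_mul_pos_of_mul_pos {ξ x : ℝ} (h : 0 < ξ * x) : 0 < Real.sign ξ * x := by
  rcases lt_trichotomy ξ 0 with hξ | rfl | hξ
  · rw [Real.sign_of_neg hξ]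
    nlinarith
  · simp at h
  · rw [Real.sign_of_pos hξ]
    nlinarith

namespace ProbabilityTheory

variable {Ω : Type*} [MeasurableSpace Ω] {P : Measure Ω}

lemma hasLaw_binomial_of_measure_eq {Y : Ω → ℕ} (hY : Measurable Y) {n : ℕ} {p : unitInterval}
    (h : ∀ k, P {ω | Y ω = k} = ENNReal.ofReal (n.choose k * p ^ k * (1 - p) ^ (n - k))) :
    HasLaw Y (binomial n p) P where
  aemeasurable := hY.aemeasurable
  map_eq := Measure.ext_of_singleton fun k => by
    rw [Measure.map_apply hY (measurableSet_singleton k), binomial_singleton]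
    exact h k

lemma integral_exp_mul_binomial (n : ℕ) (p : unitInterval) (c : ℝ) :
    ∫ k, Real.exp (c * k) ∂binomial n p = (1 - p + p * Real.exp c) ^ n := by
  rw [integral_binomial, ← Nat.range_succ_eq_Iic, add_comm (1 - (p : ℝ)), add_pow]
  refine sum_congr rfl fun k _ => ?_
  rw [smul_eq_mul, mul_comm c, Real.exp_nat_mul]
  ring

lemma HasLaw.mgf_binomial {Y : Ω → ℕ} {n : ℕ} {p : unitInterval} (hY : HasLaw Y (binomial n p) P)
    (c : ℝ) : mgf (fun ω => (Y ω : ℝ)) P c = (1 - p + p * Real.exp c) ^ n := by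
  rw [mgf, ← integral_exp_mul_binomial]
  exact hY.integral_comp (f := fun k : ℕ => Real.exp (c * k)) .of_discrete

lemma HasLaw.integrable_exp_mul_binomial {Y : Ω → ℕ} {n : ℕ} {p : unitInterval}
    (hY : HasLaw Y (binomial n p) P) (c : ℝ) :
    Integrable (fun ω => Real.exp (c * Y ω)) P := by
  have := integrable_binomial (n := n) (p := p) fun k : ℕ => Real.exp (c * k)
  rw [← hY.map_eq, integrable_map_measure .of_discrete hY.aemeasurable] at this
  exact this

theorem measureReal_sum_mul_le_le_exp [IsFiniteMeasure P] {ι : Type*} {Y : ι → Ω → ℕ}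
    {n : ι → ℕ} {p : ι → unitInterval} (hlaw : ∀ i, HasLaw (Y i) (binomial (n i) (p i)) P)
    (hmeas : ∀ i, Measurable (Y i)) (hind : iIndepFun Y P) (a : ι → ℝ) (s : Finset ι)
    {t : ℝ} (ht : 0 ≤ t) (y : ℝ) :
    P.real {ω | ∑ i ∈ s, a i * Y i ω ≤ y}
      ≤ Real.exp (t * y - ∑ i ∈ s, (n i : ℝ) * p i * (1 - Real.exp (-(t * a i)))) := by
  set X : ι → Ω → ℝ := fun i ω => a i * Y i ω
  have hXmeas : ∀ i, Measurable (X i) := fun i =>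
    (measurable_from_top.comp (hmeas i)).const_mul _
  have hXind : iIndepFun X P := hind.comp (fun i k => a i * k) fun _ => measurable_from_top
  have hmgf : ∀ i, mgf (X i) P (-t) = (1 - p i + p i * Real.exp (-(t * a i))) ^ n i := by
    intro i
    rw [mgf_const_mul, (hlaw i).mgf_binomial]
    ring_nf
  have hint : Integrable (fun ω => Real.exp (-t * (∑ i ∈ s, X i) ω)) P :=
    hXind.integrable_exp_mul_sum hXmeas fun i _ => by
      simpa [X, mul_assoc] using (hlaw i).integrable_exp_mul_binomial (-t * a i)
  calc P.real {ω | ∑ i ∈ s, a i * Y i ω ≤ y}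
      = P.real {ω | (∑ i ∈ s, X i) ω ≤ y} := by simp [X]
    _ ≤ Real.exp (t * y) * ∏ i ∈ s, (1 - p i + p i * Real.exp (-(t * a i))) ^ n i := by
      have := measure_le_le_exp_mul_mgf y (neg_nonpos.2 ht) hint
      rwa [hXind.mgf_sum hXmeas, neg_neg, prod_congr rfl fun i _ => hmgf i] at this
    _ ≤ Real.exp (t * y)
          * ∏ i ∈ s, Real.exp (-((n i : ℝ) * p i * (1 - Real.exp (-(t * a i))))) := by
      refine mul_le_mul_of_nonneg_left (prod_le_prod (fun i _ => ?_) fun i _ => ?_)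
        (Real.exp_pos _).le
      · exact pow_nonneg (by nlinarith [(p i).2.1, (p i).2.2, Real.exp_pos (-(t * a i))]) _
      · exact one_sub_add_mul_pow_le_exp (p i).2.1 (p i).2.2 (Real.exp_pos _).le _
    _ = _ := by rw [← Real.exp_sum, ← Real.exp_add, sum_neg_distrib, sub_eq_add_neg]

end ProbabilityTheory

/-- `R_{N,m,r} = trials (d m - 1) r N`. -/
def trials (e r N : ℕ) : ℕ := (N / 2 - 1).choose (e - r) * (N / 2).choose r

/-- `p_{N,m,r} = cappedProb (α m r) (d m - 1) N`. -/
noncomputable def cappedProb (a : ℝ) (e N : ℕ) : ℝ :=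
  min (a * Real.log N / ((N - 1).choose e : ℝ)) 1

lemma cappedProb_nonneg {a : ℝ} (ha : 0 ≤ a) (e N : ℕ) : 0 ≤ cappedProb a e N :=
  le_min (by have := Real.log_natCast_nonneg N; positivity) zero_le_one

lemma cappedProb_le_one (a : ℝ) (e N : ℕ) : cappedProb a e N ≤ 1 := min_le_right _ _

lemma tendsto_trials_mul_cappedProb_div_log {e r : ℕ} (hr : r ≤ e) (he : 1 ≤ e) (a : ℝ) :
    Tendsto (fun n : ℕ => trials e r (2 * n) * cappedProb a e (2 * n) / Real.log (2 * n : ℕ)) atTop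
      (𝓝 (a * ((e.choose r : ℝ) / 2 ^ e))) := by
  have hsmall : Tendsto (fun n : ℕ => a * Real.log (2 * n : ℕ) / ((2 * n - 1).choose e : ℝ))
      atTop (𝓝 0) := by
    simpa [mul_div_assoc] using ((isLittleO_log_choose_sub_one he).tendsto_div_nhds_zero.comp
      tendsto_two_mul_atTop).const_mul a
  refine ((tendsto_choose_mul_choose_div_choose hr).const_mul a).congr' ?_
  filter_upwards [hsmall.eventually (gt_mem_nhds one_pos), eventually_ge_atTop 1] with n hlt hn
  have hlog : Real.log (2 * n : ℕ) ≠ 0 := (Real.log_pos (by norm_cast; omega)).ne'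
  rw [trials, Nat.mul_div_cancel_left n two_pos, cappedProb, min_eq_left hlt.le]
  push_cast at hlog ⊢
  field_simp

lemma tendsto_sum_trials_mul_cappedProb_div_log {M : ℕ} {d : Fin M → ℕ} (hd : ∀ m, 2 ≤ d m)
    (α w : Fin M → ℕ → ℝ) :
    Tendsto (fun n : ℕ => (∑ m, ∑ r ∈ range (d m), trials (d m - 1) r (2 * n)
        * cappedProb (α m r) (d m - 1) (2 * n) * w m r) / Real.log (2 * n : ℕ)) atTop
      (𝓝 (∑ m, ∑ r ∈ range (d m), α m r * ((d m - 1).choose r / 2 ^ (d m - 1)) * w m r)) := by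
  simp only [sum_div]
  refine tendsto_finsetSum _ fun m _ => tendsto_finsetSum _ fun r hr => ?_
  have hr' : r ≤ d m - 1 := by have := mem_range.1 hr; omega
  have he : 1 ≤ d m - 1 := by have := hd m; omega
  exact ((tendsto_trials_mul_cappedProb_div_log hr' he (α m r)).mul_const (w m r)).congr
    fun n => (mul_div_right_comm _ _ _).symm

lemma tendsto_sum_trials_mul_cappedProb_div_log_eq_psi {M : ℕ} {d : Fin M → ℕ}
    (hd : ∀ m, 2 ≤ d m) {α : Fin M → ℕ → ℝ} {ψ : ℝ → ℝ}
    (hψ : ∀ x, ψ x = ∑ m, ((2 : ℝ) ^ (d m - 1))⁻¹ * ∑ r ∈ Finset.range (d m),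
      ((d m - 1).choose r : ℝ) * α m r
        * (1 - Real.exp (-(x * ((d m : ℝ) - 1 - 2 * r))))) (x : ℝ) :
    Tendsto (fun n : ℕ => (∑ m, ∑ r ∈ range (d m), trials (d m - 1) r (2 * n)
        * cappedProb (α m r) (d m - 1) (2 * n) * (1 - Real.exp (-(x * ((d m : ℝ) - 1 - 2 * r)))))
        / Real.log (2 * n : ℕ)) atTop (𝓝 (ψ x)) := by
  convert tendsto_sum_trials_mul_cappedProb_div_log hd α _ using 2
  rw [hψ]
  refine sum_congr rfl fun m _ => ?_
  rw [mul_sum]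
  exact sum_congr rfl fun r _ => by ring

lemma psi_le_xi_mul {M : ℕ} {d : Fin M → ℕ} {α : Fin M → ℕ → ℝ}
    (hα : ∀ m, ∀ r < d m, 0 ≤ α m r) {ψ : ℝ → ℝ}
    (hψ : ∀ x, ψ x = ∑ m, ((2 : ℝ) ^ (d m - 1))⁻¹ * ∑ r ∈ Finset.range (d m),
      ((d m - 1).choose r : ℝ) * α m r
        * (1 - Real.exp (-(x * ((d m : ℝ) - 1 - 2 * r)))))
    {ξ : ℝ} (hξ : ξ = ∑ m, ((2 : ℝ) ^ (d m - 1))⁻¹ * ∑ r ∈ Finset.range (d m),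
      ((d m - 1).choose r : ℝ) * ((d m : ℝ) - 1 - 2 * r) * α m r) (x : ℝ) :
    ψ x ≤ ξ * x := by
  rw [hψ, hξ, sum_mul]
  refine sum_le_sum fun m _ => ?_
  rw [mul_assoc, sum_mul]
  refine mul_le_mul_of_nonneg_left (sum_le_sum fun r hr => ?_) (by positivity)
  have hαr := hα m r (mem_range.1 hr)
  have hexp := Real.one_sub_le_exp_neg (x * ((d m : ℝ) - 1 - 2 * r))
  calc ((d m - 1).choose r : ℝ) * α m r * (1 - Real.exp (-(x * ((d m : ℝ) - 1 - 2 * r))))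
      ≤ ((d m - 1).choose r : ℝ) * α m r * (x * ((d m : ℝ) - 1 - 2 * r)) := by
        gcongr
        linarith
    _ = ((d m - 1).choose r : ℝ) * ((d m : ℝ) - 1 - 2 * r) * α m r * x := by ring

def pairsBelow {M : ℕ} (d : Fin M → ℕ) : Finset {q : Fin M × ℕ // q.2 < d q.1} :=
  (univ ×ˢ range (univ.sup d)).subtype fun q => q.2 < d q.1

lemma sum_pairsBelow {M : ℕ} (d : Fin M → ℕ) {β : Type*} [AddCommMonoid β] (f : Fin M → ℕ → β) :
    ∑ q ∈ pairsBelow d, f q.1.1 q.1.2 = ∑ m, ∑ r ∈ range (d m), f m r := by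
  rw [pairsBelow, sum_subtype_eq_sum_filter (fun q : Fin M × ℕ => f q.1 q.2), sum_filter,
    sum_product]
  refine sum_congr rfl fun m _ => ?_
  rw [← sum_filter]
  congr 1
  ext r
  simpa using fun h : r < d m => h.trans_le (le_sup (mem_univ m))

theorem measureReal_lower_tail_le {Ω : Type*} [MeasurableSpace Ω] {P : Measure Ω}
    [IsFiniteMeasure P] {M : ℕ} {d : Fin M → ℕ} {α : Fin M → ℕ → ℝ}
    (hα : ∀ m, ∀ r < d m, 0 ≤ α m r) {Y : Fin M → ℕ → Ω → ℕ}
    (hmeas : ∀ m r, Measurable (Y m r)) {N : ℕ}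
    (hdist : ∀ m, ∀ r < d m, ∀ k, P {ω | Y m r ω = k} = ENNReal.ofReal
      ((trials (d m - 1) r N).choose k * cappedProb (α m r) (d m - 1) N ^ k
        * (1 - cappedProb (α m r) (d m - 1) N) ^ (trials (d m - 1) r N - k)))
    (hind : iIndepFun (fun q : {q : Fin M × ℕ // q.2 < d q.1} => Y q.1.1 q.1.2) P)
    (c : ℝ) (a : Fin M → ℕ → ℝ) {t : ℝ} (ht : 0 ≤ t) (y : ℝ) :
    P.real {ω | c * ∑ m, ∑ r ∈ range (d m), a m r * Y m r ω ≤ y}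
      ≤ Real.exp (t * y - ∑ m, ∑ r ∈ range (d m), trials (d m - 1) r N
          * cappedProb (α m r) (d m - 1) N * (1 - Real.exp (-(t * (c * a m r))))) := by
  let p : {q : Fin M × ℕ // q.2 < d q.1} → unitInterval := fun q =>
    ⟨cappedProb (α q.1.1 q.1.2) (d q.1.1 - 1) N,
      cappedProb_nonneg (hα _ _ q.2) _ _, cappedProb_le_one _ _ _⟩
  have hlaw : ∀ q : {q : Fin M × ℕ // q.2 < d q.1},
      HasLaw (Y q.1.1 q.1.2) (binomial (trials (d q.1.1 - 1) q.1.2 N) (p q)) P := fun q =>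
    hasLaw_binomial_of_measure_eq (hmeas _ _) (hdist _ _ q.2)
  have hchernoff := measureReal_sum_mul_le_le_exp hlaw (fun q => hmeas _ _) hind
    (fun q => c * a q.1.1 q.1.2) (pairsBelow d) ht y
  have hevent : ∀ ω, c * ∑ m, ∑ r ∈ range (d m), a m r * Y m r ω
      = ∑ q ∈ pairsBelow d, c * a q.1.1 q.1.2 * Y q.1.1 q.1.2 ω := fun ω => by
    have := sum_pairsBelow d fun m r => c * a m r * Y m r ω
    beta_reduce at this
    rw [this]
    simp only [mul_sum, mul_assoc]
  have hexponent := sum_pairsBelow d fun m r => (trials (d m - 1) r N : ℝ)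
    * cappedProb (α m r) (d m - 1) N * (1 - Real.exp (-(t * (c * a m r))))
  beta_reduce at hexponent
  simp only [hevent, ← hexponent]
  exact hchernoff

theorem diagonal_lower_bound_whp_general
    (M : ℕ) (d : Fin M → ℕ) (hd : ∀ m, 2 ≤ d m)
    (α : Fin M → ℕ → ℝ) (hα : ∀ m r, r ≤ d m → 0 < α m r)
    (ψ : ℝ → ℝ)
    (hψ : ∀ x, ψ x = ∑ m, ((2 : ℝ) ^ (d m - 1))⁻¹ * ∑ r ∈ Finset.range (d m),
      ((d m - 1).choose r : ℝ) * α m r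
        * (1 - Real.exp (-(x * ((d m : ℝ) - 1 - 2 * r)))))
    (ξ : ℝ)
    (hξdef : ξ = ∑ m, ((2 : ℝ) ^ (d m - 1))⁻¹ * ∑ r ∈ Finset.range (d m),
      ((d m - 1).choose r : ℝ) * ((d m : ℝ) - 1 - 2 * r) * α m r)
    (hξ : ξ ≠ 0) (s : ℝ) (hs : s = Real.sign ξ)
    (hI : 1 < ⨆ x : ℝ, ψ x)
    (Ω : ℕ → Type) (mΩ : ∀ N, MeasurableSpace (Ω N))
    (μ : ∀ N, Measure (Ω N)) (hprob : ∀ N, IsProbabilityMeasure (μ N))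
    (Y : ∀ N, Fin M → ℕ → Ω N → ℕ)
    (hmeas : ∀ N m r, Measurable (Y N m r))
    (hdist : ∀ N : ℕ, Even N → ∀ m : Fin M, ∀ r < d m, ∀ k : ℕ,
      μ N {ω | Y N m r ω = k}
        = ENNReal.ofReal
            ((((N / 2 - 1).choose (d m - 1 - r) * (N / 2).choose r).choose k : ℝ)
              * (min (α m r * Real.log N / (((N - 1).choose (d m - 1) : ℕ) : ℝ)) 1) ^ k
              * (1 - min (α m r * Real.log N / (((N - 1).choose (d m - 1) : ℕ) : ℝ)) 1)
                  ^ ((N / 2 - 1).choose (d m - 1 - r) * (N / 2).choose r - k)))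
    (hindep : ∀ N : ℕ, Even N →
      iIndepFun
        (fun q : {q : Fin M × ℕ // q.2 < d q.1} => Y N q.1.1 q.1.2) (μ N)) :
    ∃ ε : ℝ, 0 < ε ∧
      Tendsto
        (fun N : ℕ =>
          (N : ℝ) * (μ N {ω | s * ∑ m, ∑ r ∈ Finset.range (d m),
              ((d m : ℝ) - 1 - 2 * r) * (Y N m r ω : ℝ) ≤ ε * Real.log N}).toReal)
        (atTop ⊓ Filter.principal {N : ℕ | Even N})
        (nhds 0) := by
  have hα' : ∀ m, ∀ r < d m, 0 ≤ α m r := fun m r hr => (hα m r hr.le).le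
  obtain ⟨x₀, hx₀⟩ := exists_lt_of_lt_ciSup hI
  have ht : 0 < s * x₀ :=
    hs ▸ sign_mul_pos_of_mul_pos (by linarith [psi_le_xi_mul hα' hψ hξdef x₀])
  have hts : ∀ a, s * x₀ * (s * a) = x₀ * a := by
    rcases Real.sign_apply_eq_of_ne_zero ξ hξ with h | h <;> intro a <;> simp [hs, h]
  have htε : s * x₀ * ((ψ x₀ - 1) / (2 * (s * x₀))) = (ψ x₀ - 1) / 2 := by
    rw [mul_comm 2, ← div_div, ← mul_div_assoc, mul_div_cancel₀ _ ht.ne']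
  set ε := (ψ x₀ - 1) / (2 * (s * x₀))
  refine ⟨ε, div_pos (by linarith) (by positivity), tendsto_of_tendsto_two_mul ?_⟩
  have hlog : Tendsto (fun n : ℕ => Real.log (2 * n : ℕ)) atTop atTop :=
    Real.tendsto_log_atTop.comp (tendsto_natCast_atTop_atTop.comp tendsto_two_mul_atTop)
  refine squeeze_zero (fun n => by positivity) (fun n => ?_)
    (tendsto_exp_mul_sub_of_tendsto_div (c := 1 + (ψ x₀ - 1) / 2) hlog
      (tendsto_sum_trials_mul_cappedProb_div_log_eq_psi hd hψ x₀) (by linarith))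
  have := hprob (2 * n)
  have htail := measureReal_lower_tail_le hα' (hmeas (2 * n)) (hdist _ (even_two_mul n))
    (hindep _ (even_two_mul n)) s (fun m r => (d m : ℝ) - 1 - 2 * r) ht.le
    (ε * Real.log (2 * n : ℕ))
  simp only [hts] at htail
  calc ((2 * n : ℕ) : ℝ) * (μ (2 * n) _).toReal
      ≤ Real.exp (Real.log (2 * n : ℕ)) * Real.exp (s * x₀ * (ε * Real.log (2 * n : ℕ)) - _) :=
        mul_le_mul (Real.le_exp_log _) htail measureReal_nonneg (Real.exp_pos _).le
    _ = Real.exp ((1 + (ψ x₀ - 1) / 2) * Real.log (2 * n : ℕ) - _) := by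
      rw [← Real.exp_add, ← mul_assoc, htε]
      congr 1
      ring

/-- if I = sup_x ψ(x) > 1, then there is ε > 0 such that
N · P(D_N ≤ ε log N) → 0 along even N, where
D_N = s·Σ_m Σ_{r<d_m} (d_m−1−2r)·Y_{N,m,r} with independent binomial Y's and
s = sgn(ξ), ξ ≠ 0. -/
theorem diagonal_lower_bound_whp
    (M : ℕ) (hM : 1 ≤ M) (d : Fin M → ℕ) (hd : ∀ m, 2 ≤ d m)
    (α : Fin M → ℕ → ℝ) (hα : ∀ m r, r ≤ d m → 0 < α m r)
    (hsym : ∀ m r, r ≤ d m → α m r = α m (d m - r))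
    (ψ : ℝ → ℝ)
    (hψ : ∀ x, ψ x = ∑ m, ((2 : ℝ) ^ (d m - 1))⁻¹ * ∑ r ∈ Finset.range (d m),
      ((d m - 1).choose r : ℝ) * α m r
        * (1 - Real.exp (-(x * ((d m : ℝ) - 1 - 2 * r)))))
    (ξ : ℝ)
    (hξdef : ξ = ∑ m, ((2 : ℝ) ^ (d m - 1))⁻¹ * ∑ r ∈ Finset.range (d m),
      ((d m - 1).choose r : ℝ) * ((d m : ℝ) - 1 - 2 * r) * α m r)
    (hξ : ξ ≠ 0) (s : ℝ) (hs : s = Real.sign ξ)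
    (hI : 1 < ⨆ x : ℝ, ψ x)
    (Ω : ℕ → Type) (mΩ : ∀ N, MeasurableSpace (Ω N))
    (μ : ∀ N, Measure (Ω N)) (hprob : ∀ N, IsProbabilityMeasure (μ N))
    (Y : ∀ N, Fin M → ℕ → Ω N → ℕ)
    (hmeas : ∀ N m r, Measurable (Y N m r))
    (hdist : ∀ N : ℕ, Even N → ∀ m : Fin M, ∀ r < d m, ∀ k : ℕ,
      μ N {ω | Y N m r ω = k}
        = ENNReal.ofReal
            ((((N / 2 - 1).choose (d m - 1 - r) * (N / 2).choose r).choose k : ℝ)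
              * (min (α m r * Real.log N / (((N - 1).choose (d m - 1) : ℕ) : ℝ)) 1) ^ k
              * (1 - min (α m r * Real.log N / (((N - 1).choose (d m - 1) : ℕ) : ℝ)) 1)
                  ^ ((N / 2 - 1).choose (d m - 1 - r) * (N / 2).choose r - k)))
    (hindep : ∀ N : ℕ, Even N →
      iIndepFun
        (fun q : {q : Fin M × ℕ // q.2 < d q.1} => Y N q.1.1 q.1.2) (μ N)) :
    ∃ ε : ℝ, 0 < ε ∧
      Tendsto
        (fun N : ℕ =>
          (N : ℝ) * (μ N {ω | s * ∑ m, ∑ r ∈ Finset.range (d m),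
              ((d m : ℝ) - 1 - 2 * r) * (Y N m r ω : ℝ) ≤ ε * Real.log N}).toReal)
        (atTop ⊓ Filter.principal {N : ℕ | Even N})
        (nhds 0) :=
  diagonal_lower_bound_whp_general M d hd α hα ψ hψ ξ hξdef hξ s hs hI Ω mΩ μ hprob Y hmeas hdist
    hindep
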